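/- Let S be a finite set with |S| = n. In the network D_WO^S, let F(D_WO^S) ⊆ ℝ^A be the convex hull of the characteristic vectors χ^{A(P)} of the arc sets A(P) of all source–sink paths P, and let P_WO^S ⊆ ℝ^{S⋆S} be the convex hull of the characteristic vectors x^R of all strict weak orders R on S. Let π : ℝ^A → ℝ^{S⋆S} be the linear map with π(Φ)_{(i,j)} = Σ { Φ_a : a = (X,Z) ∈ A, i ∈ X and j ∈ Z \ X }. Then π maps F(D_WO^S) onto P_WO^S, i.e., π(F(D_WO^S)) = P_WO^S. -/

import Mathlib

open scoped Classical

/-- Arcs of the network `D_WO^S`: pairs `(X, Z)` of subsets of `S` with `X ⊂ Z`. -/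
def WOArc (S : Type*) [Fintype S] [DecidableEq S] :=
  {a : Finset S × Finset S // a.1 ⊂ a.2}

noncomputable instance (S : Type*) [Fintype S] [DecidableEq S] : Fintype (WOArc S) := by
  unfold WOArc; infer_instance

/-- The characteristic vectors `χ^{A(P)}` of the arc sets of all source–sink paths `P`
in the network `D_WO^S` (from source `∅` to sink `S`). -/
noncomputable def woPathVectors (S : Type*) [Fintype S] [DecidableEq S] :
    Set (WOArc S → ℝ) :=
  {Φ | ∃ (m : ℕ) (X : Fin (m + 1) → Finset S),
    X 0 = ∅ ∧ X (Fin.last m) = Finset.univ ∧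
    (∀ k : Fin m, X k.castSucc ⊂ X k.succ) ∧
    Φ = fun a => if ∃ k : Fin m, (X k.castSucc, X k.succ) = a.val then 1 else 0}

/-- The projection `π : ℝ^A → ℝ^{S⋆S}`, with
`π(Φ)_{(i,j)} = Σ { Φ_a : a = (X,Z) ∈ A, i ∈ X and j ∈ Z \ X }`. -/
noncomputable def woProj (S : Type*) [Fintype S] [DecidableEq S] (Φ : WOArc S → ℝ) :
    {p : S × S // p.1 ≠ p.2} → ℝ :=
  fun p => ∑ a : WOArc S,
    if p.val.1 ∈ a.val.1 ∧ p.val.2 ∈ a.val.2 ∧ p.val.2 ∉ a.val.1 then Φ a else 0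
/-!
A source–sink path `∅ = X₀ ⊂ ⋯ ⊂ Xₘ = S` is the same thing as a surjection `e : S → Fin m`,
`e i` being the step at which `i` enters the chain, so that `Xₖ = {i | e i < k}`. The arc
`(Xₖ, Xₖ₊₁)` contributes to `π(χ)_{(i,j)}` exactly when `e j = k` and `e i < k`, hence `π` sends
the path to the characteristic vector of the strict weak order `e i < e j`. Conversely, every
strict weak order is the pullback of `<` along such a surjection: rank `i` by its number of
predecessors and compress the ranks to an initial segment of `ℕ`. So `π` maps the vertices of
`F(D_WO^S)` onto those of `P_WO^S`, and a linear map commutes with convex hulls.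
-/

open Finset Function

section RankChain

variable {S : Type*} [Fintype S] {m : ℕ}

def rankChain (e : S → Fin m) (k : Fin (m + 1)) : Finset S :=
  {i | (e i).castSucc < k}

@[simp]
lemma mem_rankChain {e : S → Fin m} {k : Fin (m + 1)} {i : S} :
    i ∈ rankChain e k ↔ (e i).castSucc < k := by
  simp [rankChain]

lemma rankChain_zero (e : S → Fin m) : rankChain e 0 = ∅ := by
  ext i
  simp

lemma rankChain_last (e : S → Fin m) : rankChain e (Fin.last m) = univ := by
  ext i
  simp [Fin.castSucc_lt_last]

lemma surjective_iff_rankChain_ssubset {e : S → Fin m} :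
    Surjective e ↔ ∀ k : Fin m, rankChain e k.castSucc ⊂ rankChain e k.succ := by
  have hsub (k : Fin m) : rankChain e k.castSucc ⊆ rankChain e k.succ := fun i hi => by
    rw [mem_rankChain] at hi ⊢
    exact hi.trans Fin.castSucc_lt_succ
  simp only [ssubset_iff_of_subset (hsub _), mem_rankChain, Fin.castSucc_lt_castSucc_iff,
    Fin.castSucc_lt_succ_iff, not_lt, ← le_antisymm_iff]
  rfl

lemma exists_eq_rankChain {X : Fin (m + 1) → Finset S} (hX : Monotone X) (h0 : X 0 = ∅)
    (hlast : X (Fin.last m) = univ) : ∃ e : S → Fin m, X = rankChain e := by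
  have hentry (i : S) : ∃ k : Fin m, i ∈ X k.succ :=
    (Fin.exists_fin_succ (P := fun k => i ∈ X k)).mp ⟨Fin.last m, hlast ▸ mem_univ i⟩
      |>.resolve_left (by simp [h0])
  refine ⟨fun i => Fin.find _ (hentry i), funext fun l => ?_⟩
  ext i
  rw [mem_rankChain]
  induction l using Fin.cases with
  | zero => simp [h0]
  | succ k =>
    rw [Fin.castSucc_lt_succ_iff, Fin.find_le_iff]
    exact ⟨fun h => ⟨k, le_rfl, h⟩, fun ⟨l, hlk, hl⟩ => hX (Fin.succ_le_succ_iff.2 hlk) hl⟩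

end RankChain

section WeakOrder

variable {S : Type*} [Fintype S]

lemma exists_nat_rank_of_asymm_of_negTrans {R : S → S → Prop}
    (hasymm : ∀ i j, R i j → ¬ R j i) (hneg : ∀ i j k, ¬ R i j → ¬ R j k → ¬ R i k) :
    ∃ r : S → ℕ, ∀ i j, R i j ↔ r i < r j := by
  refine ⟨fun i => #{k | R k i}, fun i j => ⟨fun hij => card_lt_card ?_, fun hlt => ?_⟩⟩
  · refine (ssubset_iff_of_subset fun k hk => ?_).2
      ⟨i, by simpa using hij, by simpa using fun h => hasymm i i h h⟩
    simp only [mem_filter, mem_univ, true_and] at hk ⊢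
    by_contra hkj
    exact hneg k j i hkj (hasymm i j hij) hk
  · by_contra hij
    refine hlt.not_ge (card_le_card fun k hk => ?_)
    simp only [mem_filter, mem_univ, true_and] at hk ⊢
    by_contra hki
    exact hneg k i j hki hij hk

lemma exists_surjective_fin_lt_iff {α : Type*} [LinearOrder α] (r : S → α) :
    ∃ (m : ℕ) (e : S → Fin m), Surjective e ∧ ∀ i j, e i < e j ↔ r i < r j := by
  let ι := (univ.image r).orderIsoOfFin rfl
  refine ⟨_, fun i => ι.symm ⟨r i, mem_image_of_mem r (mem_univ i)⟩, fun k => ?_, fun i j => ?_⟩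
  · obtain ⟨i, -, hi⟩ := mem_image.1 (ι k).2
    exact ⟨i, by simp [hi]⟩
  · simp [ι.symm.lt_iff_lt]

def rankVectors (S : Type*) : Set ({p : S × S // p.1 ≠ p.2} → ℝ) :=
  {x | ∃ (m : ℕ) (e : S → Fin m),
    Surjective e ∧ x = fun p => if e p.val.1 < e p.val.2 then 1 else 0}

lemma weakOrderVectors_eq_rankVectors :
    {x : {p : S × S // p.1 ≠ p.2} → ℝ | ∃ R : S → S → Prop,
      ((∀ i j, R i j → ¬ R j i) ∧ (∀ i j k, ¬ R i j → ¬ R j k → ¬ R i k)) ∧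
      x = fun p => if R p.val.1 p.val.2 then 1 else 0} = rankVectors S := by
  ext x
  constructor
  · rintro ⟨R, ⟨hasymm, hneg⟩, rfl⟩
    obtain ⟨r, hr⟩ := exists_nat_rank_of_asymm_of_negTrans hasymm hneg
    obtain ⟨m, e, he, her⟩ := exists_surjective_fin_lt_iff r
    exact ⟨m, e, he, by simp only [hr, her]⟩
  · rintro ⟨m, e, -, rfl⟩
    exact ⟨fun i j => e i < e j, ⟨fun i j => lt_asymm,
      fun i j k hij hjk => not_lt.2 ((not_lt.1 hjk).trans (not_lt.1 hij))⟩, by congr!⟩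

end WeakOrder

section Projection

variable {S : Type*} [Fintype S] [DecidableEq S] {m : ℕ}

noncomputable def chainVector (X : Fin (m + 1) → Finset S) : WOArc S → ℝ :=
  fun a => if ∃ k : Fin m, (X k.castSucc, X k.succ) = a.val then 1 else 0

lemma woProj_isLinearMap : IsLinearMap ℝ (woProj S) where
  map_add Φ Ψ := by
    ext p
    simp only [woProj, Pi.add_apply, ← sum_add_distrib, ite_add_ite, add_zero]
  map_smul c Φ := by
    ext p
    simp only [woProj, Pi.smul_apply, smul_eq_mul, mul_sum, mul_ite, mul_zero]

lemma woProj_chainVector {X : Fin (m + 1) → Finset S}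
    (hX : ∀ k : Fin m, X k.castSucc ⊂ X k.succ) (p : {p : S × S // p.1 ≠ p.2}) :
    woProj S (chainVector X) p = ∑ k : Fin m,
      if p.val.1 ∈ X k.castSucc ∧ p.val.2 ∈ X k.succ ∧ p.val.2 ∉ X k.castSucc then 1 else 0 := by
  have hinj : Injective fun k : Fin m => X k.castSucc :=
    (Fin.strictMono_iff_lt_succ.2 hX).injective.comp (Fin.castSucc_injective m)
  let arc : Fin m ↪ WOArc S :=
    ⟨fun k => ⟨(X k.castSucc, X k.succ), hX k⟩,
      fun k l h => hinj (congrArg (fun a : WOArc S => a.val.1) h)⟩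
  have harc (a : WOArc S) :
      (∃ k, arc k = a) ↔ ∃ k : Fin m, (X k.castSucc, X k.succ) = a.val :=
    exists_congr fun k => Subtype.ext_iff (p := fun a : Finset S × Finset S => a.1 ⊂ a.2)
  calc woProj S (chainVector X) p
      = ∑ a, if ∃ k, arc k = a then
          (if p.val.1 ∈ a.val.1 ∧ p.val.2 ∈ a.val.2 ∧ p.val.2 ∉ a.val.1 then 1 else 0) else 0 := by
        refine sum_congr rfl fun a _ => ?_
        simp only [chainVector, harc, ← ite_and, and_comm]
    _ = ∑ a ∈ univ.map arc,
          if p.val.1 ∈ a.val.1 ∧ p.val.2 ∈ a.val.2 ∧ p.val.2 ∉ a.val.1 then 1 else 0 := by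
        rw [← sum_filter]
        congr 1
        ext a
        simp
    _ = _ := sum_map _ _ _

lemma woProj_chainVector_rankChain {e : S → Fin m} (he : Surjective e)
    (p : {p : S × S // p.1 ≠ p.2}) :
    woProj S (chainVector (rankChain e)) p = if e p.val.1 < e p.val.2 then 1 else 0 := by
  rw [woProj_chainVector (surjective_iff_rankChain_ssubset.1 he)]
  simp only [mem_rankChain, Fin.castSucc_lt_castSucc_iff, Fin.castSucc_lt_succ_iff, not_lt,
    ← le_antisymm_iff, and_comm (a := e _ < _), ite_and, sum_ite_eq, mem_univ, if_true]

lemma woProj_image_woPathVectors : woProj S '' woPathVectors S = rankVectors S := by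
  ext x
  constructor
  · rintro ⟨_, ⟨m, X, h0, hlast, hX, rfl⟩, rfl⟩
    obtain ⟨e, rfl⟩ :=
      exists_eq_rankChain (Fin.monotone_iff_le_succ.2 fun k => (hX k).subset) h0 hlast
    have he := surjective_iff_rankChain_ssubset.2 hX
    exact ⟨m, e, he, funext (woProj_chainVector_rankChain he)⟩
  · rintro ⟨m, e, he, rfl⟩
    exact ⟨chainVector (rankChain e), ⟨m, rankChain e, rankChain_zero e, rankChain_last e,
      surjective_iff_rankChain_ssubset.1 he, rfl⟩, funext (woProj_chainVector_rankChain he)⟩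

end Projection

/-- The projection `π` maps the flow polytope `F(D_WO^S)` (the convex hull of the
characteristic vectors of arc sets of source–sink paths) onto the weak order polytope
`P_WO^S` (the convex hull of the characteristic vectors of all strict weak orders). -/
theorem woProj_image_flowPolytope (S : Type*) [Fintype S] [DecidableEq S] :
    woProj S '' convexHull ℝ (woPathVectors S) =
      convexHull ℝ
        {x : {p : S × S // p.1 ≠ p.2} → ℝ |
          ∃ R : S → S → Prop,
            ((∀ i j, R i j → ¬ R j i) ∧ (∀ i j k, ¬ R i j → ¬ R j k → ¬ R i k)) ∧
            x = fun p => if R p.val.1 p.val.2 then 1 else 0} := by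
  rw [woProj_isLinearMap.image_convexHull, woProj_image_woPathVectors,
    weakOrderVectors_eq_rankVectors]
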